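/- arXiv:math/0501447 — 2 statements merged into one kernel-verified Lean document; each statement's English description precedes it below -/
import Mathlib

section
/- For every matrix A in SL(2, ℂ) there exist matrices X and Y in SL(2, ℂ) with trace X = 0, trace Y = 0, and A = X * Y. -/
/-!
Writing `A = X * (X⁻¹ * A)`, it suffices to find a trace-zero `X ∈ SL(2, ℂ)` with
`trace (X⁻¹ * A) = 0`. For a trace-zero `2 × 2` matrix the adjugate is `-X`, so this is the
single linear condition `trace (X * A) = 0` on `X = !![x, y; z, -x]` together with the
quadric `x * x + y * z = -1`, which has a solution as soon as `-1` is a square.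
-/

open Matrix

namespace Matrix

theorem adjugate_fin_two_eq_neg_of_trace_eq_zero {R : Type*} [CommRing R]
    {M : Matrix (Fin 2) (Fin 2) R} (h : M.trace = 0) : M.adjugate = -M := by
  have h11 : M 1 1 = -M 0 0 := eq_neg_of_add_eq_zero_right (by rwa [trace_fin_two] at h)
  rw [adjugate_fin_two]
  ext i j
  fin_cases i <;> fin_cases j <;> simp [h11]

namespace SpecialLinearGroup

theorem trace_inv_mul_eq_neg_of_trace_eq_zero {R : Type*} [CommRing R]
    {X : SpecialLinearGroup (Fin 2) R} (h : (X : Matrix (Fin 2) (Fin 2) R).trace = 0)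
    (A : SpecialLinearGroup (Fin 2) R) :
    ((X⁻¹ * A : SpecialLinearGroup (Fin 2) R) : Matrix (Fin 2) (Fin 2) R).trace =
      -(X * A : Matrix (Fin 2) (Fin 2) R).trace := by
  rw [coe_mul, coe_inv, adjugate_fin_two_eq_neg_of_trace_eq_zero h, neg_mul, trace_neg]

theorem exists_trace_eq_zero_trace_mul_eq_zero {K : Type*} [Field K]
    (hK : IsSquare (-1 : K)) (A : Matrix (Fin 2) (Fin 2) K) :
    ∃ X : SpecialLinearGroup (Fin 2) K,
      (X : Matrix (Fin 2) (Fin 2) K).trace = 0 ∧ (X * A : Matrix (Fin 2) (Fin 2) K).trace = 0 := by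
  obtain ⟨x, y, z, hdet, horth⟩ : ∃ x y z : K,
      x * x + y * z = -1 ∧ x * (A 0 0 - A 1 1) + y * A 1 0 + z * A 0 1 = 0 := by
    obtain ⟨i, hi⟩ := hK
    by_cases hc : A 1 0 = 0
    · by_cases hb : A 0 1 = 0
      · exact ⟨0, 1, -1, by ring, by rw [hb, hc]; ring⟩
      · exact ⟨i, 0, -i * (A 0 0 - A 1 1) / A 0 1, by rw [hi]; ring, by field_simp; ring⟩
    · exact ⟨i, -i * (A 0 0 - A 1 1) / A 1 0, 0, by rw [hi]; ring, by field_simp; ring⟩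
  refine ⟨⟨!![x, y; z, -x], by rw [det_fin_two_of]; linear_combination -hdet⟩, ?_, ?_⟩
  · simp [trace_fin_two]
  · simp only [trace_fin_two, mul_apply, Fin.sum_univ_two, of_apply, cons_val', cons_val_zero,
      cons_val_one, empty_val', cons_val_fin_one]
    linear_combination horth

end SpecialLinearGroup

end Matrix

/-- Every element of `SL(2, ℂ)` is a product of two trace-zero elements
(the lifts of half-turns). -/
theorem stmt_7 (A : Matrix.SpecialLinearGroup (Fin 2) ℂ) :
    ∃ X Y : Matrix.SpecialLinearGroup (Fin 2) ℂ,
      Matrix.trace (X : Matrix (Fin 2) (Fin 2) ℂ) = 0 ∧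
      Matrix.trace (Y : Matrix (Fin 2) (Fin 2) ℂ) = 0 ∧
      A = X * Y := by
  obtain ⟨X, hX, hXA⟩ :=
    SpecialLinearGroup.exists_trace_eq_zero_trace_mul_eq_zero ⟨Complex.I, by simp⟩ A
  refine ⟨X, X⁻¹ * A, hX, ?_, (mul_inv_cancel_left X A).symm⟩
  rw [SpecialLinearGroup.trace_inv_mul_eq_neg_of_trace_eq_zero hX, hXA, neg_zero]
end

section
/- Let A and B be matrices in SL(2, ℂ) that have no common eigenvector in ℂ², i.e., there is no nonzero vector v ∈ ℂ² and scalars λ, μ ∈ ℂ with A·v = λ·v and B·v = μ·v. Then there exist matrices X, Y, Z in SL(2, ℂ) with trace X = 0, trace Y = 0, trace Z = 0, A = X * Y, and B = Z * Y. -/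
/-!
Trace-zero 2×2 matrices form a 3-dimensional space, so some nonzero traceless `Y` satisfies
the two linear conditions `tr (A Y) = tr (B Y) = 0`. If `det Y = 0`, then `Y = v φᵀ` with
`φ v = 0` and `tr (A Y) = φ (A v)`; both conditions say that `A v` and `B v` lie in
`ker Y = span v`, so `v` is a common eigenvector. Hence `det Y ≠ 0`, and after rescaling
`Y ∈ SL(2, ℂ)`. A traceless element of `SL(2)` satisfies `Y⁻¹ = -Y`, so `X = A Y⁻¹` and
`Z = B Y⁻¹` are traceless as well.
-/

namespace Matrix

variable {K : Type*} [Field K]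

theorem exists_ne_zero_trace_eq_zero_trace_mul_eq_zero (A B : Matrix (Fin 2) (Fin 2) K) :
    ∃ Y : Matrix (Fin 2) (Fin 2) K,
      Y ≠ 0 ∧ trace Y = 0 ∧ trace (A * Y) = 0 ∧ trace (B * Y) = 0 := by
  let f : Matrix (Fin 2) (Fin 2) K →ₗ[K] Fin 3 → K := LinearMap.pi ![traceLinearMap _ K K,
    traceLinearMap _ K K ∘ₗ LinearMap.mulLeft K A, traceLinearMap _ K K ∘ₗ LinearMap.mulLeft K B]
  obtain ⟨Y, hYf, hY⟩ := Submodule.exists_mem_ne_zero_of_ne_bot <|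
    LinearMap.ker_ne_bot_of_finrank_lt (f := f) (by simp [Module.finrank_matrix])
  exact ⟨Y, hY, congrFun hYf 0, congrFun hYf 1, congrFun hYf 2⟩

-- Writing `Y = v φᵀ` with `φ v = 0`: `Y A Y = v (φ (A v)) φᵀ = tr (A Y) • Y`.
theorem mul_mul_eq_trace_mul_smul {Y : Matrix (Fin 2) (Fin 2) K} (htr : trace Y = 0)
    (hdet : det Y = 0) (A : Matrix (Fin 2) (Fin 2) K) : Y * A * Y = trace (A * Y) • Y := by
  rw [trace_fin_two] at htr
  rw [det_fin_two] at hdet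
  ext i j
  fin_cases i <;> fin_cases j <;>
    simp [mul_apply, Fin.sum_univ_two, trace_fin_two] <;> grind

theorem exists_smul_eq_of_mulVec_eq_zero {Y : Matrix (Fin 2) (Fin 2) K} (hY : Y ≠ 0)
    {v w : Fin 2 → K} (hv : v ≠ 0) (hYv : Y *ᵥ v = 0) (hYw : Y *ᵥ w = 0) :
    ∃ c : K, c • v = w := by
  let N := LinearMap.ker (toLin' Y)
  have hv' : (⟨v, hYv⟩ : N) ≠ 0 := by simpa [Subtype.ext_iff] using hv
  have hN : Module.finrank K N = 1 := by
    have hlt : Module.finrank K N < 2 := by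
      simpa using Submodule.finrank_lt (s := N) fun h ↦
        hY (toLin'.map_eq_zero_iff.mp (LinearMap.ker_eq_top.mp h))
    have hpos : 0 < Module.finrank K N := Module.finrank_pos_iff_exists_ne_zero.mpr ⟨_, hv'⟩
    omega
  obtain ⟨c, hc⟩ := (finrank_eq_one_iff_of_nonzero' _ hv').mp hN ⟨w, hYw⟩
  exact ⟨c, congrArg Subtype.val hc⟩

theorem exists_mulVec_eq_smul_of_trace_mul_eq_zero {Y : Matrix (Fin 2) (Fin 2) K} (hY : Y ≠ 0)
    (htr : trace Y = 0) (hdet : det Y = 0) {u : Fin 2 → K} (hu : Y *ᵥ u ≠ 0)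
    {A : Matrix (Fin 2) (Fin 2) K} (hA : trace (A * Y) = 0) :
    ∃ lam : K, A *ᵥ (Y *ᵥ u) = lam • (Y *ᵥ u) := by
  have hker : ∀ B, trace (B * Y) = 0 → Y *ᵥ (B *ᵥ (Y *ᵥ u)) = 0 := fun B hB ↦ by
    rw [mulVec_mulVec, mulVec_mulVec, mul_mul_eq_trace_mul_smul htr hdet, hB, zero_smul,
      zero_mulVec]
  obtain ⟨lam, hlam⟩ := exists_smul_eq_of_mulVec_eq_zero hY hu
    (by simpa using hker 1 (by simpa using htr)) (hker A hA)
  exact ⟨lam, hlam.symm⟩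

theorem exists_common_eigenvector_of_det_eq_zero {Y A B : Matrix (Fin 2) (Fin 2) K} (hY : Y ≠ 0)
    (htr : trace Y = 0) (hdet : det Y = 0) (hA : trace (A * Y) = 0) (hB : trace (B * Y) = 0) :
    ∃ (v : Fin 2 → K) (lam mu : K), v ≠ 0 ∧ A *ᵥ v = lam • v ∧ B *ᵥ v = mu • v := by
  obtain ⟨u, hu⟩ : ∃ u, Y *ᵥ u ≠ 0 := by
    by_contra! h
    exact hY (ext_iff_mulVec.mpr fun u ↦ by simp [h])
  obtain ⟨lam, hlam⟩ := exists_mulVec_eq_smul_of_trace_mul_eq_zero hY htr hdet hu hA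
  obtain ⟨mu, hmu⟩ := exists_mulVec_eq_smul_of_trace_mul_eq_zero hY htr hdet hu hB
  exact ⟨_, lam, mu, hu, hlam, hmu⟩

theorem SpecialLinearGroup.coe_inv_eq_neg_of_trace_eq_zero {R : Type*} [CommRing R]
    (Y : SpecialLinearGroup (Fin 2) R) (h : trace (Y : Matrix (Fin 2) (Fin 2) R) = 0) :
    ((Y⁻¹ : SpecialLinearGroup (Fin 2) R) : Matrix (Fin 2) (Fin 2) R) = -Y := by
  rw [trace_fin_two] at h
  rw [SpecialLinearGroup.coe_inv, adjugate_fin_two]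
  ext i j
  fin_cases i <;> fin_cases j <;> simp <;> linear_combination h

theorem exists_specialLinearGroup_trace_eq_zero_trace_mul_eq_zero [IsAlgClosed K]
    (A B : Matrix (Fin 2) (Fin 2) K)
    (h : ¬ ∃ (v : Fin 2 → K) (lam mu : K), v ≠ 0 ∧ A *ᵥ v = lam • v ∧ B *ᵥ v = mu • v) :
    ∃ Y : SpecialLinearGroup (Fin 2) K, trace (Y : Matrix (Fin 2) (Fin 2) K) = 0 ∧
      trace (A * (Y : Matrix (Fin 2) (Fin 2) K)) = 0 ∧
      trace (B * (Y : Matrix (Fin 2) (Fin 2) K)) = 0 := by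
  obtain ⟨Y, hY, htr, hA, hB⟩ := exists_ne_zero_trace_eq_zero_trace_mul_eq_zero A B
  have hdet : det Y ≠ 0 := fun hdet ↦
    h (exists_common_eigenvector_of_det_eq_zero hY htr hdet hA hB)
  obtain ⟨e, he⟩ := IsAlgClosed.exists_pow_nat_eq (det Y)⁻¹ two_pos
  refine ⟨⟨e • Y, by simp [he, hdet]⟩, ?_, ?_, ?_⟩ <;>
    simp [trace_smul, htr, hA, hB]

end Matrix

/-- If `A, B ∈ SL(2, ℂ)` have no common eigenvector, then there are trace-zero
matrices `X, Y, Z ∈ SL(2, ℂ)` (lifts of half-turns) with `A = X·Y` and `B = Z·Y`. -/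
theorem stmt_8 (A B : Matrix.SpecialLinearGroup (Fin 2) ℂ)
    (h : ¬ ∃ (v : Fin 2 → ℂ) (lam mu : ℂ), v ≠ 0 ∧
        (A : Matrix (Fin 2) (Fin 2) ℂ).mulVec v = lam • v ∧
        (B : Matrix (Fin 2) (Fin 2) ℂ).mulVec v = mu • v) :
    ∃ X Y Z : Matrix.SpecialLinearGroup (Fin 2) ℂ,
      Matrix.trace (X : Matrix (Fin 2) (Fin 2) ℂ) = 0 ∧
      Matrix.trace (Y : Matrix (Fin 2) (Fin 2) ℂ) = 0 ∧
      Matrix.trace (Z : Matrix (Fin 2) (Fin 2) ℂ) = 0 ∧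
      A = X * Y ∧ B = Z * Y := by
  obtain ⟨Y, hY, hA, hB⟩ :=
    Matrix.exists_specialLinearGroup_trace_eq_zero_trace_mul_eq_zero _ _ h
  refine ⟨A * Y⁻¹, Y, B * Y⁻¹, ?_, hY, ?_, (inv_mul_cancel_right A Y).symm,
    (inv_mul_cancel_right B Y).symm⟩ <;>
    simp [Matrix.SpecialLinearGroup.coe_inv_eq_neg_of_trace_eq_zero Y hY, hA, hB]
end
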